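/- arXiv:1807.09813 — 2 statements merged into one kernel-verified Lean document; each statement's English description precedes it below -/
import Mathlib

section
/- Let Σ and Σ̃ be two symmetric N × N real matrices. Then for every β ∈ C_{TV,ω}(L), βᵀ Σ̃ β ≥ βᵀ Σ β − |L| · ( 8 · max_{1≤j≤p}(d_j+1) · max_{j,l} ω_{j,l} / min_{j,l} ω_{j,l} )² · ( max_{1≤k,k′≤N} |Σ_{k,k′} − Σ̃_{k,k′}| ) · ‖β_L‖_2². -/
open Matrix

/-- The anchored weighted total-variation norm
`‖u‖_{TV,w} = w₁|u₁| + Σ_{l=2}^{m+1} w_l |u_l − u_{l−1}|` on `ℝ^{m+1}`. -/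
noncomputable def tvNorm {m : ℕ} (w u : Fin (m + 1) → ℝ) : ℝ :=
  w 0 * |u 0| + ∑ l : Fin m, w l.succ * |u l.succ - u l.castSucc|

/-- Restriction of a vector to a set of coordinates (`u_K`). -/
def restrictF {m : ℕ} (K : Finset (Fin m)) (u : Fin m → ℝ) : Fin m → ℝ :=
  fun l => if l ∈ K then u l else 0

lemma tvNorm_nonneg {m : ℕ} {w : Fin (m + 1) → ℝ} (hw : ∀ l, 0 ≤ w l)
    (u : Fin (m + 1) → ℝ) : 0 ≤ tvNorm w u := by
  unfold tvNorm
  have h0 : 0 ≤ w 0 * |u 0| := mul_nonneg (hw _) (abs_nonneg _)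
  have hs : 0 ≤ ∑ l : Fin m, w l.succ * |u l.succ - u l.castSucc| :=
    Finset.sum_nonneg fun l _ => mul_nonneg (hw _) (abs_nonneg _)
  linarith

lemma tvNorm_add_le {m : ℕ} {w : Fin (m + 1) → ℝ} (hw : ∀ l, 0 ≤ w l)
    (a b : Fin (m + 1) → ℝ) :
    tvNorm w (fun l => a l + b l) ≤ tvNorm w a + tvNorm w b := by
  unfold tvNorm
  have h0 : w 0 * |a 0 + b 0| ≤ w 0 * |a 0| + w 0 * |b 0| := by
    rw [← mul_add]
    exact mul_le_mul_of_nonneg_left (abs_add_le _ _) (hw 0)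
  have hs : ∑ l : Fin m, w l.succ * |(a l.succ + b l.succ) - (a l.castSucc + b l.castSucc)|
      ≤ ∑ l : Fin m, (w l.succ * |a l.succ - a l.castSucc|
        + w l.succ * |b l.succ - b l.castSucc|) := by
    refine Finset.sum_le_sum fun l _ => ?_
    rw [← mul_add]
    refine mul_le_mul_of_nonneg_left ?_ (hw _)
    calc |(a l.succ + b l.succ) - (a l.castSucc + b l.castSucc)|
        = |(a l.succ - a l.castSucc) + (b l.succ - b l.castSucc)| := by congr 1; ring
      _ ≤ _ := abs_add_le _ _
  rw [Finset.sum_add_distrib] at hs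
  linarith

lemma tvNorm_le_two_mul {m : ℕ} {w : Fin (m + 1) → ℝ} {M : ℝ} (hM : 0 ≤ M)
    (hw : ∀ l, w l ≤ M) (u : Fin (m + 1) → ℝ) :
    tvNorm w u ≤ 2 * M * ∑ l, |u l| := by
  unfold tvNorm
  have h1 : w 0 * |u 0| ≤ M * |u 0| := mul_le_mul_of_nonneg_right (hw 0) (abs_nonneg _)
  have h2 : ∑ l : Fin m, w l.succ * |u l.succ - u l.castSucc|
      ≤ ∑ l : Fin m, (M * |u l.succ| + M * |u l.castSucc|) := by
    refine Finset.sum_le_sum fun l _ => ?_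
    calc w l.succ * |u l.succ - u l.castSucc| ≤ M * |u l.succ - u l.castSucc| :=
        mul_le_mul_of_nonneg_right (hw _) (abs_nonneg _)
      _ ≤ M * (|u l.succ| + |u l.castSucc|) :=
        mul_le_mul_of_nonneg_left (abs_sub _ _) hM
      _ = M * |u l.succ| + M * |u l.castSucc| := by ring
  rw [Finset.sum_add_distrib, ← Finset.mul_sum, ← Finset.mul_sum] at h2
  have e1 : ∑ l : Fin m, |u l.succ| = (∑ l : Fin (m + 1), |u l|) - |u 0| := by
    rw [Fin.sum_univ_succ (f := fun l => |u l|)]; ring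
  have e2 : ∑ l : Fin m, |u l.castSucc| = (∑ l : Fin (m + 1), |u l|) - |u (Fin.last m)| := by
    rw [Fin.sum_univ_castSucc (f := fun l => |u l|)]; ring
  rw [e1, e2] at h2
  have h4 : M * ((∑ l : Fin (m + 1), |u l|) - |u 0|)
      + M * ((∑ l : Fin (m + 1), |u l|) - |u (Fin.last m)|)
      = 2 * M * (∑ l : Fin (m + 1), |u l|) - M * |u 0| - M * |u (Fin.last m)| := by ring
  have h5 : 0 ≤ M * |u (Fin.last m)| := mul_nonneg hM (abs_nonneg _)
  linarith [h1, h2, h4, h5]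

lemma mul_abs_le_tvNorm {m : ℕ} {w : Fin (m + 1) → ℝ} {c : ℝ} (hc : 0 ≤ c)
    (hw : ∀ l, c ≤ w l) (u : Fin (m + 1) → ℝ) (l : Fin (m + 1)) :
    c * |u l| ≤ tvNorm w u := by
  classical
  set D : ℕ → ℝ := fun k =>
    if h : k < m then |u (⟨k, h⟩ : Fin m).succ - u (⟨k, h⟩ : Fin m).castSucc| else 0 with hD
  have hDnn : ∀ k, 0 ≤ D k := by
    intro k; simp only [hD]; split
    · exact abs_nonneg _
    · exact le_refl 0
  have key : ∀ n (hn : n < m + 1), |u ⟨n, hn⟩| ≤ |u 0| + ∑ k ∈ Finset.range n, D k := by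
    intro n
    induction n with
    | zero => intro hn; simp
    | succ n ih =>
      intro hn
      have hnm : n < m := Nat.lt_of_succ_lt_succ hn
      have hn' : n < m + 1 := Nat.lt_of_succ_lt hn
      have h1 : |u ⟨n + 1, hn⟩| - |u ⟨n, hn'⟩| ≤ |u ⟨n + 1, hn⟩ - u ⟨n, hn'⟩| :=
        abs_sub_abs_le_abs_sub _ _
      have h2 : D n = |u ⟨n + 1, hn⟩ - u ⟨n, hn'⟩| := by
        simp only [hD, dif_pos hnm, Fin.succ_mk, Fin.castSucc_mk]
      have h3 := ih hn'
      rw [Finset.sum_range_succ, h2]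
      linarith
  have step1 : |u l| ≤ |u 0| + ∑ i : Fin m, |u i.succ - u i.castSucc| := by
    have h := key l.val l.isLt
    have hsub : ∑ k ∈ Finset.range l.val, D k ≤ ∑ k ∈ Finset.range m, D k :=
      Finset.sum_le_sum_of_subset_of_nonneg
        (Finset.range_subset_range.mpr (Nat.lt_succ_iff.mp l.isLt)) (fun k _ _ => hDnn k)
    have heq : ∑ k ∈ Finset.range m, D k = ∑ i : Fin m, |u i.succ - u i.castSucc| := by
      rw [← Fin.sum_univ_eq_sum_range]
      refine Finset.sum_congr rfl fun i _ => ?_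
      simp only [hD, dif_pos i.isLt, Fin.eta]
    have hl : (⟨l.val, l.isLt⟩ : Fin (m + 1)) = l := Fin.eta l l.isLt
    rw [hl] at h
    linarith [h, hsub, heq.le, heq.ge]
  calc c * |u l| ≤ c * (|u 0| + ∑ i : Fin m, |u i.succ - u i.castSucc|) :=
      mul_le_mul_of_nonneg_left step1 hc
    _ = c * |u 0| + ∑ i : Fin m, c * |u i.succ - u i.castSucc| := by
        rw [mul_add, Finset.mul_sum]
    _ ≤ tvNorm w u := by
        unfold tvNorm
        exact add_le_add (mul_le_mul_of_nonneg_right (hw 0) (abs_nonneg _))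
          (Finset.sum_le_sum fun i _ => mul_le_mul_of_nonneg_right (hw _) (abs_nonneg _))

lemma restrict_add_restrict_compl {m : ℕ} (K : Finset (Fin m)) (u : Fin m → ℝ) :
    (fun l => restrictF K u l + restrictF Kᶜ u l) = u := by
  funext l
  by_cases h : l ∈ K <;> simp [restrictF, h]

lemma sum_abs_restrict {m : ℕ} (K : Finset (Fin m)) (u : Fin m → ℝ) :
    ∑ l, |restrictF K u l| = ∑ l ∈ K, |u l| := by
  classical
  rw [← Finset.sum_filter_add_sum_filter_not Finset.univ (· ∈ K) (fun l => |restrictF K u l|)]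
  have h1 : ∑ l ∈ Finset.univ.filter (· ∈ K), |restrictF K u l| = ∑ l ∈ K, |u l| := by
    rw [Finset.filter_mem_eq_inter, Finset.univ_inter]
    exact Finset.sum_congr rfl fun l hl => by simp [restrictF, hl]
  have h2 : ∑ l ∈ Finset.univ.filter (¬ · ∈ K), |restrictF K u l| = 0 := by
    refine Finset.sum_eq_zero fun l hl => ?_
    simp only [Finset.mem_filter] at hl
    simp [restrictF, hl.2]
  rw [h1, h2, add_zero]

/-- perturbation of quadratic forms on the cone `C_{TV,ω}(L)`:
for symmetric `Σ₁, Σ₂` with entries uniformly `Δ`-close,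
`βᵀΣ₂β ≥ βᵀΣ₁β − |L| (8 maxⱼ(dⱼ+1) ωmax/ωmin)² Δ ‖β_L‖₂²`. -/
theorem quadform_perturbation {p : ℕ} (hp : 1 ≤ p) {d : Fin p → ℕ}
    (hd : ∀ j, 1 ≤ d j)
    (ω : (j : Fin p) → Fin (d j + 1) → ℝ)
    (ωmin ωmax : ℝ) (hωmin : 0 < ωmin)
    (hlo : ∀ j l, ωmin ≤ ω j l) (hhi : ∀ j l, ω j l ≤ ωmax)
    (dmax : ℕ) (hdmax : ∀ j, d j + 1 ≤ dmax)
    (L : (j : Fin p) → Finset (Fin (d j + 1)))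
    (A B : Matrix ((j : Fin p) × Fin (d j + 1)) ((j : Fin p) × Fin (d j + 1)) ℝ)
    (hA : A.IsSymm) (hB : B.IsSymm)
    (Δ : ℝ) (hΔ : ∀ k k', |A k k' - B k k'| ≤ Δ)
    (β : (j : Fin p) → Fin (d j + 1) → ℝ)
    (hcone : ∑ j, tvNorm (ω j) (restrictF (L j)ᶜ (β j)) ≤
      3 * ∑ j, tvNorm (ω j) (restrictF (L j) (β j))) :
    (fun k : (j : Fin p) × Fin (d j + 1) => β k.1 k.2) ⬝ᵥ
        B.mulVec (fun k => β k.1 k.2)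
      ≥ (fun k : (j : Fin p) × Fin (d j + 1) => β k.1 k.2) ⬝ᵥ
          A.mulVec (fun k => β k.1 k.2)
        - (∑ j, ((L j).card : ℝ)) * (8 * dmax * ωmax / ωmin) ^ 2 * Δ *
            (∑ j, ∑ l ∈ L j, (β j l) ^ 2) := by
  classical
  set v : ((j : Fin p) × Fin (d j + 1)) → ℝ := fun k => β k.1 k.2 with hv
  have hω0 : ∀ (j : Fin p) (l : Fin (d j + 1)), 0 ≤ ω j l := fun j l => hωmin.le.trans (hlo j l)
  have hj0 : 0 < p := hp
  have hΔ0 : 0 ≤ Δ := (abs_nonneg _).trans (hΔ ⟨⟨0, hj0⟩, 0⟩ ⟨⟨0, hj0⟩, 0⟩)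
  have hmm : ωmin ≤ ωmax := (hlo ⟨0, hj0⟩ 0).trans (hhi ⟨0, hj0⟩ 0)
  have hωmax0 : 0 ≤ ωmax := hωmin.le.trans hmm
  have hdmax0 : (0 : ℝ) ≤ (dmax : ℝ) := Nat.cast_nonneg _
  set S1 : ℝ := ∑ j, ∑ l, |β j l| with hS1
  set SL : ℝ := ∑ j, ∑ l ∈ L j, |β j l| with hSL
  set T : ℝ := ∑ j, tvNorm (ω j) (β j) with hT
  set TL : ℝ := ∑ j, tvNorm (ω j) (restrictF (L j) (β j)) with hTL
  set Q : ℝ := ∑ j, ∑ l ∈ L j, (β j l) ^ 2 with hQ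
  set K : ℝ := ∑ j, ((L j).card : ℝ) with hK
  have hS1nn : 0 ≤ S1 :=
    Finset.sum_nonneg fun j _ => Finset.sum_nonneg fun l _ => abs_nonneg _
  have hSLnn : 0 ≤ SL :=
    Finset.sum_nonneg fun j _ => Finset.sum_nonneg fun l _ => abs_nonneg _
  have hsigma : ∀ f : ((j : Fin p) × Fin (d j + 1)) → ℝ,
      ∑ k, f k = ∑ j, ∑ l, f ⟨j, l⟩ := by
    intro f
    rw [← Finset.univ_sigma_univ, Finset.sum_sigma]
  -- Step A
  have stepA : v ⬝ᵥ A.mulVec v - v ⬝ᵥ B.mulVec v ≤ Δ * S1 ^ 2 := by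
    have hrw : v ⬝ᵥ A.mulVec v - v ⬝ᵥ B.mulVec v
        = ∑ k, ∑ k', v k * (A k k' - B k k') * v k' := by
      simp only [dotProduct, mulVec]
      rw [← Finset.sum_sub_distrib]
      refine Finset.sum_congr rfl fun k _ => ?_
      rw [Finset.mul_sum, Finset.mul_sum, ← Finset.sum_sub_distrib]
      refine Finset.sum_congr rfl fun k' _ => ?_
      ring
    have hbd : ∀ k k', v k * (A k k' - B k k') * v k' ≤ |v k| * Δ * |v k'| := by
      intro k k'
      calc v k * (A k k' - B k k') * v k' ≤ |v k * (A k k' - B k k') * v k'| := le_abs_self _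
        _ = |v k| * |A k k' - B k k'| * |v k'| := by rw [abs_mul, abs_mul]
        _ ≤ |v k| * Δ * |v k'| := by
            refine mul_le_mul_of_nonneg_right ?_ (abs_nonneg _)
            exact mul_le_mul_of_nonneg_left (hΔ k k') (abs_nonneg _)
    have habs : ∑ k, |v k| = S1 := by rw [hS1, hsigma (fun k => |v k|)]
    calc v ⬝ᵥ A.mulVec v - v ⬝ᵥ B.mulVec v
        = ∑ k, ∑ k', v k * (A k k' - B k k') * v k' := hrw
      _ ≤ ∑ k, ∑ k', |v k| * Δ * |v k'| :=
          Finset.sum_le_sum fun k _ => Finset.sum_le_sum fun k' _ => hbd k k'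
      _ = Δ * S1 ^ 2 := by
          simp only [← Finset.mul_sum]
          rw [← Finset.sum_mul, habs, ← Finset.sum_mul, habs]
          ring
  -- Step B
  have stepB : ωmin * S1 ≤ (dmax : ℝ) * T := by
    have hj : ∀ j, ωmin * ∑ l, |β j l| ≤ (dmax : ℝ) * tvNorm (ω j) (β j) := by
      intro j
      have htv0 : 0 ≤ tvNorm (ω j) (β j) := tvNorm_nonneg (hω0 j) _
      have h1 : ∑ l : Fin (d j + 1), ωmin * |β j l|
          ≤ ∑ _l : Fin (d j + 1), tvNorm (ω j) (β j) :=
        Finset.sum_le_sum fun l _ => mul_abs_le_tvNorm hωmin.le (hlo j) (β j) l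
      have h2 : ∑ _l : Fin (d j + 1), tvNorm (ω j) (β j)
          = ((d j + 1 : ℕ) : ℝ) * tvNorm (ω j) (β j) := by
        rw [Finset.sum_const, Finset.card_univ, Fintype.card_fin, nsmul_eq_mul]
      have h3 : ((d j + 1 : ℕ) : ℝ) ≤ (dmax : ℝ) := by exact_mod_cast hdmax j
      rw [Finset.mul_sum]
      calc ∑ l, ωmin * |β j l| ≤ ((d j + 1 : ℕ) : ℝ) * tvNorm (ω j) (β j) := by
            rw [← h2]; exact h1
        _ ≤ (dmax : ℝ) * tvNorm (ω j) (β j) := mul_le_mul_of_nonneg_right h3 htv0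
    rw [hS1, hT, Finset.mul_sum, Finset.mul_sum]
    exact Finset.sum_le_sum fun j _ => hj j
  -- Step C
  have stepC : T ≤ 4 * TL := by
    have hj : ∀ j, tvNorm (ω j) (β j)
        ≤ tvNorm (ω j) (restrictF (L j) (β j)) + tvNorm (ω j) (restrictF (L j)ᶜ (β j)) := by
      intro j
      have hdec := restrict_add_restrict_compl (L j) (β j)
      calc tvNorm (ω j) (β j)
          = tvNorm (ω j) (fun l => restrictF (L j) (β j) l + restrictF (L j)ᶜ (β j) l) := by
            rw [hdec]
        _ ≤ _ := tvNorm_add_le (hω0 j) _ _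
    have h1 : T ≤ TL + ∑ j, tvNorm (ω j) (restrictF (L j)ᶜ (β j)) := by
      rw [hT, hTL, ← Finset.sum_add_distrib]
      exact Finset.sum_le_sum fun j _ => hj j
    linarith [hcone]
  -- Step D
  have stepD : TL ≤ 2 * ωmax * SL := by
    rw [hTL, hSL, Finset.mul_sum]
    refine Finset.sum_le_sum fun j _ => ?_
    calc tvNorm (ω j) (restrictF (L j) (β j))
        ≤ 2 * ωmax * ∑ l, |restrictF (L j) (β j) l| :=
          tvNorm_le_two_mul hωmax0 (hhi j) _
      _ = 2 * ωmax * ∑ l ∈ L j, |β j l| := by rw [sum_abs_restrict]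
  -- Step E
  have stepE : SL ^ 2 ≤ K * Q := by
    set s : Finset ((j : Fin p) × Fin (d j + 1)) := Finset.univ.sigma L with hs
    have h1 : SL = ∑ k ∈ s, |v k| := by rw [hSL, hs, Finset.sum_sigma]
    have h2 : Q = ∑ k ∈ s, (v k) ^ 2 := by rw [hQ, hs, Finset.sum_sigma]
    have h3 : K = (s.card : ℝ) := by
      rw [hK, hs, Finset.card_sigma]
      push_cast
      rfl
    have hcs := Finset.sum_mul_sq_le_sq_mul_sq s (fun _ => 1) (fun k => |v k|)
    simp only [one_mul, one_pow, Finset.sum_const, nsmul_eq_mul, mul_one, sq_abs] at hcs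
    rw [h1, h2, h3]
    exact hcs
  -- combine
  have hchain : ωmin * S1 ≤ 8 * (dmax : ℝ) * ωmax * SL := by
    calc ωmin * S1 ≤ (dmax : ℝ) * T := stepB
      _ ≤ (dmax : ℝ) * (4 * TL) := mul_le_mul_of_nonneg_left stepC hdmax0
      _ ≤ (dmax : ℝ) * (4 * (2 * ωmax * SL)) := by
          refine mul_le_mul_of_nonneg_left ?_ hdmax0
          linarith [stepD]
      _ = 8 * (dmax : ℝ) * ωmax * SL := by ring
  have hS1le : S1 ≤ (8 * (dmax : ℝ) * ωmax / ωmin) * SL := by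
    rw [div_mul_eq_mul_div, le_div_iff₀ hωmin]
    linarith [hchain]
  have hsq : S1 ^ 2 ≤ (8 * (dmax : ℝ) * ωmax / ωmin) ^ 2 * (K * Q) := by
    calc S1 ^ 2 ≤ ((8 * (dmax : ℝ) * ωmax / ωmin) * SL) ^ 2 :=
        pow_le_pow_left₀ hS1nn hS1le 2
      _ = (8 * (dmax : ℝ) * ωmax / ωmin) ^ 2 * SL ^ 2 := by ring
      _ ≤ (8 * (dmax : ℝ) * ωmax / ωmin) ^ 2 * (K * Q) :=
          mul_le_mul_of_nonneg_left stepE (sq_nonneg _)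
  have hfinal : Δ * S1 ^ 2 ≤ K * (8 * (dmax : ℝ) * ωmax / ωmin) ^ 2 * Δ * Q := by
    calc Δ * S1 ^ 2 ≤ Δ * ((8 * (dmax : ℝ) * ωmax / ωmin) ^ 2 * (K * Q)) :=
        mul_le_mul_of_nonneg_left hsq hΔ0
      _ = K * (8 * (dmax : ℝ) * ωmax / ωmin) ^ 2 * Δ * Q := by ring
  linarith [stepA, hfinal]
end

section
/- Let f ∈ ℝⁿ with f ≠ a, and set S = 2 max_{1≤i≤n} |f_i − a_i| > 0 and ψ(u) = e^u − u − 1. Then ‖f − a‖_ñ² · ψ(−S)/S² ≤ KL_n(a, f) ≤ ‖f − a‖_ñ² · ψ(S)/S². -/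
open MeasureTheory

noncomputable section

/-- `S⁰(f,t) = Σᵢ Yᵢ(t) e^{fᵢ}` with `Yᵢ(t) = 1(zᵢ ≥ t)`. -/
def S0 {n : ℕ} (z f : Fin n → ℝ) (t : ℝ) : ℝ :=
  ∑ i, if t ≤ z i then Real.exp (f i) else 0

/-- The empirical Kullback–Leibler divergence. -/
def KLn {n : ℕ} (τ : ℝ) (z a : Fin n → ℝ) (lam : ℝ → ℝ)
    (f : Fin n → ℝ) : ℝ :=
  (1 / (n : ℝ)) * ∑ i, ∫ t in (0 : ℝ)..τ,
    Real.log (Real.exp (a i) * S0 z f t / (Real.exp (f i) * S0 z a t)) *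
      (if t ≤ z i then (1 : ℝ) else 0) * lam t * Real.exp (a i)

/-- The compensated mean `ḡ(t) = Σᵢ gᵢ Yᵢ(t) e^{aᵢ} / S⁰(a,t)` (`0` when
`S⁰(a,t) = 0`). -/
def barG {n : ℕ} (z a : Fin n → ℝ) (g : Fin n → ℝ) (t : ℝ) : ℝ :=
  if S0 z a t = 0 then 0
  else (∑ i, g i * (if t ≤ z i then (1 : ℝ) else 0) * Real.exp (a i)) / S0 z a t

/-- The compensated empirical squared seminorm
`‖g‖ñ² = (1/n) ∫₀^τ Σᵢ (gᵢ − ḡ(t))² Yᵢ(t) e^{aᵢ} λ₀(t) dt`. -/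
def normSqN {n : ℕ} (τ : ℝ) (z a : Fin n → ℝ) (lam : ℝ → ℝ)
    (g : Fin n → ℝ) : ℝ :=
  (1 / (n : ℝ)) * ∫ t in (0 : ℝ)..τ,
    (∑ i, (g i - barG z a g t) ^ 2 * (if t ≤ z i then (1 : ℝ) else 0) *
      Real.exp (a i)) * lam t

end

/-!
At a fixed time `t`, put `w i = Y_i(t) e^{a_i}` and `g = f - a`. The integrand of `KLₙ` is then
the Jensen gap `W log (Σ w e^g / W) - Σ w g` (with `W = Σ w`) and the integrand of `‖g‖ñ²` is
`Σ w (g - ḡ)²`, so it suffices to compare these two quantities pointwise and integrate against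
`λ₀ ≥ 0`. For the log-partition function `F s = log Σ w_i e^{s g_i}`, `F''` and `F'''` are the
variance and third central moment of the tilted weights `w_i e^{s g_i}`. As the `g_i` lie in an
interval of length `S`, `|F'''| ≤ S F''`; by Grönwall `F'' s ≤ F'' 0 e^{S s}` (and
`≥ F'' 0 e^{-S s}`), and integrating twice over `[0, 1]` bounds the Jensen gap
`W (F 1 - F 0 - F' 0)` between `W F'' 0 ψ(-S)/S²` and `W F'' 0 ψ(S)/S²`.
-/

open Set Real

theorem le_of_hasDerivAt_le_of_le {f f' g g' : ℝ → ℝ} {a b : ℝ}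
    (hf : ∀ x ∈ Icc a b, HasDerivAt f (f' x) x) (hg : ∀ x ∈ Icc a b, HasDerivAt g (g' x) x)
    (ha : f a ≤ g a) (hle : ∀ x ∈ Ico a b, f' x ≤ g' x) :
    ∀ x ∈ Icc a b, f x ≤ g x :=
  image_le_of_deriv_right_le_deriv_boundary
    (fun x hx => (hf x hx).continuousAt.continuousWithinAt)
    (fun x hx => (hf x (Ico_subset_Icc_self hx)).hasDerivWithinAt) ha
    (fun x hx => (hg x hx).continuousAt.continuousWithinAt)
    (fun x hx => (hg x (Ico_subset_Icc_self hx)).hasDerivWithinAt) hle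

theorem taylor_remainder_le_of_thirdDeriv_le {φ φ₁ φ₂ φ₃ : ℝ → ℝ} {c : ℝ} (hc : c ≠ 0)
    (h₁ : ∀ x ∈ Icc (0 : ℝ) 1, HasDerivAt φ (φ₁ x) x)
    (h₂ : ∀ x ∈ Icc (0 : ℝ) 1, HasDerivAt φ₁ (φ₂ x) x)
    (h₃ : ∀ x ∈ Icc (0 : ℝ) 1, HasDerivAt φ₂ (φ₃ x) x)
    (hφ₃ : ∀ x ∈ Icc (0 : ℝ) 1, φ₃ x ≤ c * φ₂ x) :
    φ 1 - φ 0 - φ₁ 0 ≤ φ₂ 0 * (exp c - c - 1) / c ^ 2 := by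
  have hexp (d x : ℝ) : HasDerivAt (fun x => exp (d * x)) (d * exp (d * x)) x := by
    simpa [mul_comm] using ((hasDerivAt_id x).const_mul d).exp
  have gronwall : ∀ x ∈ Icc (0 : ℝ) 1, φ₂ x * exp (-c * x) ≤ φ₂ 0 :=
    le_of_hasDerivAt_le_of_le (fun x hx => (h₃ x hx).mul (hexp (-c) x))
      (fun x _ => hasDerivAt_const x (φ₂ 0)) (by simp) fun x hx => by
        have := hφ₃ x (Ico_subset_Icc_self hx)
        nlinarith [exp_pos (-c * x)]
  have slope : ∀ x ∈ Icc (0 : ℝ) 1, φ₁ x - φ₁ 0 ≤ φ₂ 0 * (exp (c * x) - 1) / c :=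
    le_of_hasDerivAt_le_of_le (fun x hx => (h₂ x hx).sub_const (φ₁ 0))
      (fun x _ => (((hexp c x).sub_const 1).const_mul (φ₂ 0)).div_const c) (by simp)
      fun x hx => by
        have := gronwall x (Ico_subset_Icc_self hx)
        rw [neg_mul, exp_neg, ← div_eq_mul_inv, div_le_iff₀ (exp_pos _)] at this
        field_simp
        linarith
  have remainder := le_of_hasDerivAt_le_of_le (a := 0) (b := 1)
    (f := fun x => φ x - φ 0 - x * φ₁ 0)
    (g := fun x => φ₂ 0 * (exp (c * x) - c * x - 1) / c ^ 2)
    (fun x hx => ((h₁ x hx).sub_const (φ 0)).sub (hasDerivAt_mul_const (φ₁ 0)))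
    (fun x _ => ((((hexp c x).sub ((hasDerivAt_id x).const_mul c)).sub_const 1).const_mul
      (φ₂ 0)).div_const (c ^ 2)) (by simp)
    (fun x hx => by
      have := slope x (Ico_subset_Icc_self hx)
      field_simp
      linarith) 1 (right_mem_Icc.mpr zero_le_one)
  simpa using remainder

section Weighted

variable {ι : Type*} [Fintype ι]

noncomputable def weightedMean (w g : ι → ℝ) : ℝ := (∑ i, w i * g i) / ∑ i, w i

noncomputable def weightedSqDev (w g : ι → ℝ) : ℝ :=
  ∑ i, w i * (g i - weightedMean w g) ^ 2

noncomputable def jensenGap (w g : ι → ℝ) : ℝ :=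
  (∑ i, w i) * log ((∑ i, w i * exp (g i)) / ∑ i, w i) - ∑ i, w i * g i

variable {w g : ι → ℝ}

theorem abs_sub_weightedMean_le (hw : ∀ j, 0 ≤ w j) (hW : 0 < ∑ j, w j) {S : ℝ} {i : ι}
    (hg : ∀ j, |g i - g j| ≤ S) :
    |g i - weightedMean w g| ≤ S := by
  have hsub : g i - weightedMean w g = (∑ j, w j * (g i - g j)) / ∑ j, w j := by
    simp only [weightedMean, mul_sub, Finset.sum_sub_distrib, ← Finset.sum_mul]
    field_simp
  rw [hsub, abs_div, abs_of_pos hW, div_le_iff₀ hW, Finset.mul_sum]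
  refine (Finset.abs_sum_le_sum_abs _ _).trans (Finset.sum_le_sum fun j _ => ?_)
  rw [abs_mul, abs_of_nonneg (hw j), mul_comm S]
  exact mul_le_mul_of_nonneg_left (hg j) (hw j)

theorem weightedSqDev_nonneg (hw : ∀ i, 0 ≤ w i) : 0 ≤ weightedSqDev w g :=
  Finset.sum_nonneg fun i _ => mul_nonneg (hw i) (sq_nonneg _)

theorem weightedSqDev_le (hw : ∀ i, 0 ≤ w i) {S : ℝ} (hg : ∀ i j, |g i - g j| ≤ S) :
    weightedSqDev w g ≤ S ^ 2 * ∑ i, w i := by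
  rcases (Finset.sum_nonneg fun i _ => hw i).eq_or_lt with hW | hW
  · obtain rfl := (Fintype.sum_eq_zero_iff_of_nonneg hw).mp hW.symm
    simp [weightedSqDev]
  rw [weightedSqDev, Finset.mul_sum]
  refine Finset.sum_le_sum fun i _ => ?_
  rw [mul_comm (S ^ 2)]
  refine mul_le_mul_of_nonneg_left ?_ (hw i)
  obtain ⟨hlow, hup⟩ := abs_le.mp (abs_sub_weightedMean_le hw hW (hg i))
  exact sq_le_sq' hlow hup

theorem abs_log_sum_mul_exp_div_sum_le (hw : ∀ i, 0 ≤ w i) {c : ℝ} (hc : 0 ≤ c)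
    (hg : ∀ i, |g i| ≤ c) : |log ((∑ i, w i * exp (g i)) / ∑ i, w i)| ≤ c := by
  rcases (Finset.sum_nonneg fun i _ => hw i).eq_or_lt with hW | hW
  · rwa [← hW, div_zero, log_zero, abs_zero]
  have hsandwich : exp (-c) * ∑ i, w i ≤ ∑ i, w i * exp (g i) ∧
      ∑ i, w i * exp (g i) ≤ exp c * ∑ i, w i := by
    simp only [Finset.mul_sum]
    constructor <;> refine Finset.sum_le_sum fun i _ => ?_
    · rw [mul_comm]
      exact mul_le_mul_of_nonneg_left (exp_le_exp.mpr (abs_le.mp (hg i)).1) (hw i)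
    · rw [mul_comm (exp c)]
      exact mul_le_mul_of_nonneg_left (exp_le_exp.mpr (abs_le.mp (hg i)).2) (hw i)
  have hpos : 0 < (∑ i, w i * exp (g i)) / ∑ i, w i :=
    div_pos (lt_of_lt_of_le (by positivity) hsandwich.1) hW
  rw [abs_le, le_log_iff_exp_le hpos, log_le_iff_le_exp hpos, le_div_iff₀ hW, div_le_iff₀ hW]
  exact hsandwich

end Weighted

section Tilted

variable {ι : Type*} [Fintype ι] (w g : ι → ℝ)

noncomputable def expMoment (k : ℕ) (s : ℝ) : ℝ := ∑ i, w i * g i ^ k * exp (s * g i)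

noncomputable def tiltedMean (s : ℝ) : ℝ := expMoment w g 1 s / expMoment w g 0 s

noncomputable def tiltedVar (s : ℝ) : ℝ :=
  expMoment w g 2 s / expMoment w g 0 s - tiltedMean w g s ^ 2

noncomputable def tiltedThirdCumulant (s : ℝ) : ℝ :=
  expMoment w g 3 s / expMoment w g 0 s
    - 3 * (expMoment w g 2 s / expMoment w g 0 s) * tiltedMean w g s + 2 * tiltedMean w g s ^ 3

theorem hasDerivAt_expMoment (k : ℕ) (s : ℝ) :
    HasDerivAt (expMoment w g k) (expMoment w g (k + 1) s) s := by
  refine (HasDerivAt.fun_sum fun i _ =>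
    (((hasDerivAt_mul_const (g i)).exp).const_mul (w i * g i ^ k))).congr_deriv ?_
  exact Finset.sum_congr rfl fun i _ => by ring

variable {w} (hw : ∀ i, 0 ≤ w i) (hW : 0 < ∑ i, w i)
include hw hW

theorem expMoment_zero_pos (s : ℝ) : 0 < expMoment w g 0 s := by
  obtain ⟨j, -, hj⟩ := (Finset.sum_pos_iff_of_nonneg fun i _ => hw i).mp hW
  exact Finset.sum_pos' (fun i _ => by have := hw i; positivity)
    ⟨j, Finset.mem_univ j, by simp [hj, exp_pos]⟩

theorem hasDerivAt_log_expMoment (s : ℝ) :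
    HasDerivAt (fun s => log (expMoment w g 0 s)) (tiltedMean w g s) s :=
  (hasDerivAt_expMoment w g 0 s).log (expMoment_zero_pos g hw hW s).ne'

theorem hasDerivAt_tiltedMean (s : ℝ) :
    HasDerivAt (tiltedMean w g) (tiltedVar w g s) s := by
  have h0 := (expMoment_zero_pos g hw hW s).ne'
  refine ((hasDerivAt_expMoment w g 1 s).div (hasDerivAt_expMoment w g 0 s) h0).congr_deriv ?_
  simp only [tiltedVar, tiltedMean]
  field_simp

theorem hasDerivAt_tiltedVar (s : ℝ) :
    HasDerivAt (tiltedVar w g) (tiltedThirdCumulant w g s) s := by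
  have h0 := (expMoment_zero_pos g hw hW s).ne'
  refine (((hasDerivAt_expMoment w g 2 s).div (hasDerivAt_expMoment w g 0 s) h0).sub
    ((hasDerivAt_tiltedMean g hw hW s).pow 2)).congr_deriv ?_
  simp only [tiltedThirdCumulant, tiltedVar, tiltedMean]
  simp only [Nat.cast_ofNat, Nat.add_one_sub_one, pow_one]
  field_simp
  ring

theorem tiltedVar_mul_expMoment (s : ℝ) :
    tiltedVar w g s * expMoment w g 0 s
      = ∑ i, w i * exp (s * g i) * (g i - tiltedMean w g s) ^ 2 := by
  have h0 := (expMoment_zero_pos g hw hW s).ne'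
  have expand (m : ℝ) : ∑ i, w i * exp (s * g i) * (g i - m) ^ 2
      = expMoment w g 2 s - 2 * m * expMoment w g 1 s + m ^ 2 * expMoment w g 0 s := by
    simp only [expMoment, Finset.mul_sum, ← Finset.sum_sub_distrib, ← Finset.sum_add_distrib]
    exact Finset.sum_congr rfl fun i _ => by ring
  rw [expand, tiltedVar, tiltedMean]
  field_simp
  ring

theorem tiltedThirdCumulant_mul_expMoment (s : ℝ) :
    tiltedThirdCumulant w g s * expMoment w g 0 s
      = ∑ i, w i * exp (s * g i) * (g i - tiltedMean w g s) ^ 3 := by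
  have h0 := (expMoment_zero_pos g hw hW s).ne'
  have expand (m : ℝ) : ∑ i, w i * exp (s * g i) * (g i - m) ^ 3
      = expMoment w g 3 s - 3 * m * expMoment w g 2 s + 3 * m ^ 2 * expMoment w g 1 s
        - m ^ 3 * expMoment w g 0 s := by
    simp only [expMoment, Finset.mul_sum, ← Finset.sum_sub_distrib, ← Finset.sum_add_distrib]
    exact Finset.sum_congr rfl fun i _ => by ring
  rw [expand, tiltedThirdCumulant, tiltedMean]
  field_simp
  ring

variable {S : ℝ} (hg : ∀ i j, |g i - g j| ≤ S)
include hg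

theorem abs_tiltedThirdCumulant_le (s : ℝ) :
    |tiltedThirdCumulant w g s| ≤ S * tiltedVar w g s := by
  have h0 := expMoment_zero_pos g hw hW s
  have hv (i : ι) : 0 ≤ w i * exp (s * g i) := by have := hw i; positivity
  have hmean : tiltedMean w g s = weightedMean (fun j => w j * exp (s * g j)) g := by
    simp only [tiltedMean, weightedMean, expMoment, pow_one, pow_zero, mul_one]
    congr 1
    exact Finset.sum_congr rfl fun j _ => by ring
  have hdev (i : ι) : |g i - tiltedMean w g s| ≤ S := by
    rw [hmean]
    exact abs_sub_weightedMean_le hv (by simpa [expMoment] using h0) (hg i)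
  have hmul : |tiltedThirdCumulant w g s * expMoment w g 0 s|
      ≤ S * tiltedVar w g s * expMoment w g 0 s := by
    rw [tiltedThirdCumulant_mul_expMoment g hw hW, mul_assoc, tiltedVar_mul_expMoment g hw hW,
      Finset.mul_sum]
    refine (Finset.abs_sum_le_sum_abs _ _).trans (Finset.sum_le_sum fun i _ => ?_)
    rw [abs_mul, abs_of_nonneg (hv i), pow_succ, abs_mul, abs_pow, sq_abs, mul_comm S,
      ← mul_assoc]
    exact mul_le_mul_of_nonneg_left (hdev i) (mul_nonneg (hv i) (sq_nonneg _))
  rw [abs_mul, abs_of_pos h0] at hmul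
  exact le_of_mul_le_mul_right hmul h0

theorem log_expMoment_taylor_bounds (hS : 0 < S) :
    tiltedVar w g 0 * (exp (-S) + S - 1) / S ^ 2
        ≤ log (expMoment w g 0 1) - log (expMoment w g 0 0) - tiltedMean w g 0 ∧
      log (expMoment w g 0 1) - log (expMoment w g 0 0) - tiltedMean w g 0
        ≤ tiltedVar w g 0 * (exp S - S - 1) / S ^ 2 := by
  have h₁ := fun x (_ : x ∈ Icc (0 : ℝ) 1) => hasDerivAt_log_expMoment g hw hW x
  have h₂ := fun x (_ : x ∈ Icc (0 : ℝ) 1) => hasDerivAt_tiltedMean g hw hW x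
  have h₃ := fun x (_ : x ∈ Icc (0 : ℝ) 1) => hasDerivAt_tiltedVar g hw hW x
  have hκ (x : ℝ) := abs_le.mp (abs_tiltedThirdCumulant_le g hw hW hg x)
  constructor
  -- the lower bound is the upper bound for `-log (expMoment w g 0 ·)` with `c = -S`
  · have := taylor_remainder_le_of_thirdDeriv_le (neg_ne_zero.mpr hS.ne')
      (fun x hx => (h₁ x hx).neg) (fun x hx => (h₂ x hx).neg) (fun x hx => (h₃ x hx).neg)
      fun x _ => by linarith [(hκ x).1]
    simp only [Pi.neg_apply, neg_sq, sub_neg_eq_add, neg_mul, neg_div] at this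
    linarith
  · exact taylor_remainder_le_of_thirdDeriv_le hS.ne' h₁ h₂ h₃ fun x _ => (hκ x).2

end Tilted

theorem jensenGap_bounds {ι : Type*} [Fintype ι] {w g : ι → ℝ} (hw : ∀ i, 0 ≤ w i) {S : ℝ}
    (hS : 0 < S) (hg : ∀ i j, |g i - g j| ≤ S) :
    weightedSqDev w g * (exp (-S) + S - 1) / S ^ 2 ≤ jensenGap w g ∧
      jensenGap w g ≤ weightedSqDev w g * (exp S - S - 1) / S ^ 2 := by
  rcases (Finset.sum_nonneg fun i _ => hw i).eq_or_lt with hW | hW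
  · obtain rfl := (Fintype.sum_eq_zero_iff_of_nonneg hw).mp hW.symm
    simp [jensenGap, weightedSqDev]
  have hM₁ : expMoment w g 0 1 = ∑ i, w i * exp (g i) := by simp [expMoment]
  have hM₀ : expMoment w g 0 0 = ∑ i, w i := by simp [expMoment]
  have hmean : tiltedMean w g 0 = weightedMean w g := by
    simp [tiltedMean, weightedMean, expMoment]
  have hvar : tiltedVar w g 0 * ∑ i, w i = weightedSqDev w g := by
    simpa [hM₀, hmean, weightedSqDev] using tiltedVar_mul_expMoment g hw hW 0
  have hgap : jensenGap w g = (∑ i, w i) *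
      (log (expMoment w g 0 1) - log (expMoment w g 0 0) - tiltedMean w g 0) := by
    have hpos : 0 < ∑ i, w i * exp (g i) := hM₁ ▸ expMoment_zero_pos g hw hW 1
    rw [jensenGap, hM₁, hM₀, hmean, weightedMean, log_div hpos.ne' hW.ne']
    field_simp
  obtain ⟨hlow, hup⟩ := log_expMoment_taylor_bounds g hw hW hg hS
  rw [hgap, ← hvar]
  constructor
  · calc _ = (∑ i, w i) * (tiltedVar w g 0 * (exp (-S) + S - 1) / S ^ 2) := by ring
      _ ≤ _ := mul_le_mul_of_nonneg_left hlow hW.le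
  · calc _ ≤ (∑ i, w i) * (tiltedVar w g 0 * (exp S - S - 1) / S ^ 2) :=
          mul_le_mul_of_nonneg_left hup hW.le
      _ = _ := by ring

theorem IntervalIntegrable.bdd_mul {f g : ℝ → ℝ} {a b c : ℝ}
    (hg : IntervalIntegrable g volume a b) (hf : Measurable f) (hbound : ∀ x, |f x| ≤ c) :
    IntervalIntegrable (fun x => f x * g x) volume a b :=
  ⟨hg.1.bdd_mul hf.aestronglyMeasurable (ae_of_all _ hbound),
    hg.2.bdd_mul hf.aestronglyMeasurable (ae_of_all _ hbound)⟩

section RiskSet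

variable {n : ℕ} (z a : Fin n → ℝ)

noncomputable def riskWeight (t : ℝ) (i : Fin n) : ℝ := if t ≤ z i then exp (a i) else 0

theorem riskWeight_nonneg (t : ℝ) (i : Fin n) : 0 ≤ riskWeight z a t i := by
  unfold riskWeight; split <;> positivity

theorem riskWeight_le (t : ℝ) (i : Fin n) : riskWeight z a t i ≤ exp (a i) := by
  unfold riskWeight; split
  · exact le_rfl
  · positivity

@[fun_prop]
theorem measurable_riskWeight (i : Fin n) : Measurable fun t => riskWeight z a t i :=
  Measurable.ite measurableSet_Iic measurable_const measurable_const

@[fun_prop]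
theorem measurable_S0 : Measurable (S0 z a) :=
  Finset.measurable_sum _ fun _ _ =>
    Measurable.ite measurableSet_Iic measurable_const measurable_const

theorem S0_pos {t : ℝ} {i : Fin n} (hi : t ≤ z i) : 0 < S0 z a t :=
  Finset.sum_pos' (fun j _ => by split <;> positivity)
    ⟨i, Finset.mem_univ i, by simp [hi, exp_pos]⟩

theorem S0_eq_sum_riskWeight (t : ℝ) : S0 z a t = ∑ i, riskWeight z a t i := rfl

theorem S0_eq_sum_riskWeight_mul_exp (f : Fin n → ℝ) (t : ℝ) :
    S0 z f t = ∑ i, riskWeight z a t i * exp (f i - a i) :=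
  Finset.sum_congr rfl fun i _ => by
    unfold riskWeight; split <;> simp [← exp_add]

-- The convention `ḡ(t) = 0` on an empty risk set agrees with `x / 0 = 0` in `weightedMean`.
theorem barG_eq_weightedMean (g : Fin n → ℝ) (t : ℝ) :
    barG z a g t = weightedMean (riskWeight z a t) g := by
  have hnum : ∑ i, g i * (if t ≤ z i then (1 : ℝ) else 0) * exp (a i)
      = ∑ i, riskWeight z a t i * g i :=
    Finset.sum_congr rfl fun i _ => by unfold riskWeight; split <;> simp [mul_comm]
  rw [barG, weightedMean, hnum, ← S0_eq_sum_riskWeight]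
  split_ifs with h <;> simp [h]

theorem sum_sq_sub_barG_eq_weightedSqDev (g : Fin n → ℝ) (t : ℝ) :
    ∑ i, (g i - barG z a g t) ^ 2 * (if t ≤ z i then (1 : ℝ) else 0) * exp (a i)
      = weightedSqDev (riskWeight z a t) g :=
  Finset.sum_congr rfl fun i _ => by
    rw [barG_eq_weightedMean]; unfold riskWeight; split <;> simp [mul_comm]

theorem normSqN_eq_integral_weightedSqDev (τ : ℝ) (lam : ℝ → ℝ) (g : Fin n → ℝ) :
    normSqN τ z a lam g
      = 1 / n * ∫ t in (0 : ℝ)..τ, weightedSqDev (riskWeight z a t) g * lam t := by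
  simp only [normSqN, sum_sq_sub_barG_eq_weightedSqDev]

theorem KLn_integrand_eq (f : Fin n → ℝ) (t l : ℝ) (i : Fin n) :
    log (exp (a i) * S0 z f t / (exp (f i) * S0 z a t)) * (if t ≤ z i then (1 : ℝ) else 0) * l
        * exp (a i)
      = riskWeight z a t i * (log (S0 z f t / S0 z a t) - (f i - a i)) * l := by
  by_cases hi : t ≤ z i
  · have hratio : exp (a i) * S0 z f t / (exp (f i) * S0 z a t)
        = exp (a i - f i) * (S0 z f t / S0 z a t) := by
      rw [exp_sub]; field_simp
    rw [hratio, log_mul (exp_ne_zero _) (div_pos (S0_pos z f hi) (S0_pos z a hi)).ne', log_exp]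
    simp only [riskWeight, hi, if_true]
    ring
  · simp [riskWeight, hi]

theorem sum_riskWeight_mul_log_sub_eq_jensenGap (f : Fin n → ℝ) (t : ℝ) :
    ∑ i, riskWeight z a t i * (log (S0 z f t / S0 z a t) - (f i - a i))
      = jensenGap (riskWeight z a t) (fun i => f i - a i) := by
  rw [jensenGap, S0_eq_sum_riskWeight_mul_exp z a f, S0_eq_sum_riskWeight z a]
  simp only [mul_sub, Finset.sum_sub_distrib, ← Finset.sum_mul]

variable {τ : ℝ} {lam : ℝ → ℝ} (hlam : IntervalIntegrable lam volume 0 τ)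
include hlam

theorem intervalIntegrable_KLn_integrand (f : Fin n → ℝ) (i : Fin n) :
    IntervalIntegrable
      (fun t => riskWeight z a t i * (log (S0 z f t / S0 z a t) - (f i - a i)) * lam t)
      volume 0 τ := by
  set C := ∑ j, |f j - a j|
  have hC (j : Fin n) : |f j - a j| ≤ C :=
    Finset.single_le_sum (f := fun j => |f j - a j|) (fun j _ => abs_nonneg _) (Finset.mem_univ j)
  refine hlam.bdd_mul (c := exp (a i) * (C + C)) (by fun_prop) fun t => ?_
  have hlog : |log (S0 z f t / S0 z a t)| ≤ C := by
    rw [S0_eq_sum_riskWeight_mul_exp z a, S0_eq_sum_riskWeight z a]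
    exact abs_log_sum_mul_exp_div_sum_le (riskWeight_nonneg z a t)
      (Finset.sum_nonneg fun j _ => abs_nonneg _) hC
  rw [abs_mul, abs_of_nonneg (riskWeight_nonneg z a t i)]
  exact mul_le_mul (riskWeight_le z a t i) ((abs_sub _ _).trans (add_le_add hlog (hC i)))
    (abs_nonneg _) (exp_pos _).le

theorem KLn_eq_integral_jensenGap (f : Fin n → ℝ) :
    KLn τ z a lam f = 1 / n *
      ∫ t in (0 : ℝ)..τ, jensenGap (riskWeight z a t) (fun i => f i - a i) * lam t := by
  simp only [KLn, KLn_integrand_eq, ← intervalIntegral.integral_finsetSum fun i _ =>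
      intervalIntegrable_KLn_integrand z a hlam f i,
    ← Finset.sum_mul, sum_riskWeight_mul_log_sub_eq_jensenGap]

theorem intervalIntegrable_jensenGap_mul (f : Fin n → ℝ) :
    IntervalIntegrable (fun t => jensenGap (riskWeight z a t) (fun i => f i - a i) * lam t)
      volume 0 τ := by
  simp only [← sum_riskWeight_mul_log_sub_eq_jensenGap, Finset.sum_mul]
  simpa only [Finset.sum_fn] using
    IntervalIntegrable.sum Finset.univ fun i _ => intervalIntegrable_KLn_integrand z a hlam f i

theorem intervalIntegrable_weightedSqDev_mul {g : Fin n → ℝ} {S : ℝ}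
    (hg : ∀ i j, |g i - g j| ≤ S) :
    IntervalIntegrable (fun t => weightedSqDev (riskWeight z a t) g * lam t) volume 0 τ := by
  refine hlam.bdd_mul (c := S ^ 2 * ∑ i, exp (a i))
    (by unfold weightedSqDev weightedMean; fun_prop) fun t => ?_
  rw [abs_of_nonneg (weightedSqDev_nonneg (riskWeight_nonneg z a t))]
  exact (weightedSqDev_le (riskWeight_nonneg z a t) hg).trans
    (mul_le_mul_of_nonneg_left (Finset.sum_le_sum fun i _ => riskWeight_le z a t i)
      (sq_nonneg S))

end RiskSet

theorem KL_selfconcordance_bounds_general (n : ℕ) (hn : 0 < n) (τ : ℝ) (hτ : 0 < τ)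
    (z : Fin n → ℝ) (a f : Fin n → ℝ) (hfa : f ≠ a)
    (lam : ℝ → ℝ) (hpos : ∀ t, 0 ≤ lam t)
    (hint : IntervalIntegrable lam MeasureTheory.volume 0 τ)
    (S : ℝ)
    (hS : S = 2 * Finset.univ.sup'
      (Finset.univ_nonempty_iff.mpr (Fin.pos_iff_nonempty.mp hn))
      (fun i => |f i - a i|)) :
    normSqN τ z a lam (fun i => f i - a i) * (Real.exp (-S) + S - 1) / S ^ 2 ≤
        KLn τ z a lam f ∧
      KLn τ z a lam f ≤
        normSqN τ z a lam (fun i => f i - a i) * (Real.exp S - S - 1) / S ^ 2 := by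
  have hhalf (i : Fin n) : |f i - a i| ≤ S / 2 := by
    linarith [Finset.le_sup' (fun i => |f i - a i|) (Finset.mem_univ i)]
  have hSpos : 0 < S := by
    obtain ⟨i, hi⟩ := Function.ne_iff.mp hfa
    linarith [abs_pos.mpr (sub_ne_zero.mpr hi), hhalf i]
  have hrange (i j : Fin n) : |(f i - a i) - (f j - a j)| ≤ S :=
    (abs_sub _ _).trans (by linarith [hhalf i, hhalf j])
  set V := fun t => weightedSqDev (riskWeight z a t) (fun i => f i - a i) * lam t
  set J := fun t => jensenGap (riskWeight z a t) (fun i => f i - a i) * lam t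
  have hscale (c : ℝ) : (1 / n * ∫ t in (0 : ℝ)..τ, V t) * c / S ^ 2
      = 1 / n * ∫ t in (0 : ℝ)..τ, V t * (c / S ^ 2) := by
    rw [intervalIntegral.integral_mul_const]
    ring
  have hmono {u v : ℝ → ℝ} (hu : IntervalIntegrable u volume 0 τ)
      (hv : IntervalIntegrable v volume 0 τ) (huv : ∀ t, u t ≤ v t) :
      1 / n * ∫ t in (0 : ℝ)..τ, u t ≤ 1 / n * ∫ t in (0 : ℝ)..τ, v t :=
    mul_le_mul_of_nonneg_left (intervalIntegral.integral_mono_on hτ.le hu hv fun t _ => huv t)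
      (by positivity)
  have hpoint (t : ℝ) := jensenGap_bounds (riskWeight_nonneg z a t) hSpos hrange
  have hVint : IntervalIntegrable V volume 0 τ :=
    intervalIntegrable_weightedSqDev_mul z a hint hrange
  have hJint : IntervalIntegrable J volume 0 τ := intervalIntegrable_jensenGap_mul z a hint f
  rw [KLn_eq_integral_jensenGap z a hint, normSqN_eq_integral_weightedSqDev, hscale, hscale]
  refine ⟨hmono (hVint.mul_const _) hJint fun t => ?_, hmono hJint (hVint.mul_const _) fun t => ?_⟩
  · simpa only [V, J, mul_right_comm _ (lam t), mul_div_assoc] using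
      mul_le_mul_of_nonneg_right (hpoint t).1 (hpos t)
  · simpa only [V, J, mul_right_comm _ (lam t), mul_div_assoc] using
      mul_le_mul_of_nonneg_right (hpoint t).2 (hpos t)

/-- with `S = 2 maxᵢ |fᵢ − aᵢ| > 0` and `ψ(u) = eᵘ − u − 1`,
`‖f − a‖ñ² ψ(−S)/S² ≤ KLₙ(a, f) ≤ ‖f − a‖ñ² ψ(S)/S²`. -/
theorem KL_selfconcordance_bounds (n : ℕ) (hn : 0 < n) (τ : ℝ) (hτ : 0 < τ)
    (z : Fin n → ℝ) (hz : ∀ i, 0 ≤ z i) (a f : Fin n → ℝ) (hfa : f ≠ a)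
    (lam : ℝ → ℝ) (hmeas : Measurable lam) (hpos : ∀ t, 0 ≤ lam t)
    (hint : IntervalIntegrable lam MeasureTheory.volume 0 τ)
    (S : ℝ)
    (hS : S = 2 * Finset.univ.sup'
      (Finset.univ_nonempty_iff.mpr (Fin.pos_iff_nonempty.mp hn))
      (fun i => |f i - a i|)) :
    normSqN τ z a lam (fun i => f i - a i) * (Real.exp (-S) + S - 1) / S ^ 2 ≤
        KLn τ z a lam f ∧
      KLn τ z a lam f ≤
        normSqN τ z a lam (fun i => f i - a i) * (Real.exp S - S - 1) / S ^ 2 :=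
  KL_selfconcordance_bounds_general n hn τ hτ z a f hfa lam hpos hint S hS
end
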